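/- arXiv:1304.6531 — 5 statements merged into one kernel-verified Lean document; each statement's English description precedes it below -/
import Mathlib

section
/- Let B ∈ ℝ^{N_z × (N·M)} give relative measurements between M subsystems with N outputs each. Suppose the subsystems {1,…,M} are partitioned into p groups G₁,…,G_p of equal cardinality M/p, let n = N·M, and let H ∈ {+1,−1}^{p×p} satisfy H Hᵀ = p·I_p with all entries of the first row equal to +1. Suppose moreover that for every pair of distinct groups (G_a, G_b), the number of rows of B involving both a subsystem of G_a and a subsystem of G_b is at most β·n, for some β ≥ 0. Define, for i = 1,…,p, the vector yᵢ ∈ ℝⁿ whose m-th entry equals H_{i,a}/√n whenever m ∈ q_k for some subsystem k ∈ G_a. Then y₁,…,y_p are orthonormal, B y₁ = 0, and ‖B yᵢ‖ ≤ p·√β for every i. -/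
/-!
On a row `l` comparing subsystems `j` and `k`, a vector that equals `c u` on every output of
subsystem `u` is mapped by `B` to `c j - c k`. Hence `B y₁ = 0`, and `(B yᵢ)_l` vanishes unless
the row crosses two groups `a ≠ b`, where it is `(H_{i,a} - H_{i,b}) / √n`. Each unordered pair
of groups is crossed by at most `β n` rows, so
`‖B yᵢ‖² ≤ β ∑_{a<b} (H_{i,a} - H_{i,b})² = β (p ∑_a H_{i,a}² - (∑_a H_{i,a})²) ≤ β p²`
by Lagrange's identity, since `∑_a H_{i,a}² = p` is a diagonal entry of `H Hᵀ = p I`.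
Orthonormality is `H Hᵀ = p I` once more, every group carrying `n / p` coordinates.
-/

open Matrix Finset

def RelativeMeasurements {Nz M N : ℕ} (B : Matrix (Fin Nz) (Fin M × Fin N) ℝ) : Prop :=
  ∀ l : Fin Nz, ∃ j k : Fin M, j ≠ k ∧
    (∀ m : Fin M × Fin N, m.1 ≠ j → m.1 ≠ k → B l m = 0) ∧
    (∀ i : Fin N, 0 ≤ B l (j, i)) ∧ (∑ i : Fin N, B l (j, i)) = 1 ∧
    (∀ i : Fin N, B l (k, i) ≤ 0) ∧ (∑ i : Fin N, B l (k, i)) = -1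

def InvolvedIn {Nz M N : ℕ} (B : Matrix (Fin Nz) (Fin M × Fin N) ℝ) (k : Fin M) (l : Fin Nz) :
    Prop :=
  ∃ i : Fin N, B l (k, i) ≠ 0

theorem sum_comp_eq_card_nsmul_sum {ι κ M : Type*} [Fintype ι] [Fintype κ] [DecidableEq κ]
    [AddCommMonoid M] (φ : ι → κ) {c : ℕ} (hφ : ∀ b, #{x | φ x = b} = c) (f : κ → M) :
    ∑ x, f (φ x) = c • ∑ b, f b := by
  rw [← sum_fiberwise' univ φ f, smul_sum]
  exact sum_congr rfl fun b _ => by rw [sum_const, hφ]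

theorem card_eq_mul_of_card_fiber {ι κ : Type*} [Fintype ι] [Fintype κ] [DecidableEq κ]
    (φ : ι → κ) {c : ℕ} (hφ : ∀ b, #{x | φ x = b} = c) :
    Fintype.card ι = c * Fintype.card κ := by
  simpa using sum_comp_eq_card_nsmul_sum φ hφ (fun _ => (1 : ℕ))

theorem sum_sum_sub_sq {κ : Type*} [Fintype κ] (x : κ → ℝ) :
    ∑ u, ∑ v, (x u - x v) ^ 2 = 2 * (Fintype.card κ * ∑ u, x u ^ 2 - (∑ u, x u) ^ 2) := by
  simp only [sub_sq, sum_add_distrib, sum_sub_distrib, sum_const, card_univ, nsmul_eq_mul,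
    ← sum_mul, ← mul_sum, mul_assoc]
  ring

theorem sum_sq_sub_le_of_card_pair_le {ι κ : Type*} [Fintype ι] [Fintype κ] [DecidableEq κ]
    (a b : ι → κ) (x : κ → ℝ) (C : ℝ)
    (hC : ∀ u v, u ≠ v → (#{l | a l = u ∧ b l = v ∨ a l = v ∧ b l = u} : ℝ) ≤ C) :
    ∑ l, (x (a l) - x (b l)) ^ 2 ≤ C * (Fintype.card κ * ∑ u, x u ^ 2 - (∑ u, x u) ^ 2) := by
  set w : κ → κ → ℝ := fun u v => (x u - x v) ^ 2
  set c : κ → κ → ℝ := fun u v => #{l | a l = u ∧ b l = v}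
  have hw : ∀ u v, w v u = w u v := fun u v => by simp only [w, ← neg_sub (x u), neg_sq]
  have hfiber : ∑ l, w (a l) (b l) = ∑ u, ∑ v, c u v * w u v := by
    rw [← sum_fiberwise' univ (fun l => (a l, b l)) (fun p => w p.1 p.2), Fintype.sum_prod_type]
    refine sum_congr rfl fun u _ => sum_congr rfl fun v _ => ?_
    simp [c, sum_const, Prod.ext_iff]
  have hpair : ∀ u v, (c u v + c v u) * w u v ≤ C * w u v := by
    intro u v
    rcases eq_or_ne u v with rfl | huv
    · simp [w]
    refine mul_le_mul_of_nonneg_right ?_ (sq_nonneg _)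
    calc c u v + c v u = #{l | a l = u ∧ b l = v ∨ a l = v ∧ b l = u} := by
          classical
          rw [filter_or, card_union_of_disjoint]
          · push_cast; rfl
          · exact disjoint_filter.2 fun l _ h h' => huv (h.1.symm.trans h'.1)
      _ ≤ C := hC u v huv
  calc ∑ l, (x (a l) - x (b l)) ^ 2 = ∑ u, ∑ v, c u v * w u v := hfiber
    _ = (∑ u, ∑ v, (c u v + c v u) * w u v) / 2 := by
        simp only [add_mul, sum_add_distrib]
        rw [sum_comm (f := fun u v => c v u * w u v)]
        simp only [hw]
        ring
    _ ≤ (∑ u, ∑ v, C * w u v) / 2 := by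
        gcongr ?_ / _
        exact sum_le_sum fun u _ => sum_le_sum fun v _ => hpair u v
    _ = _ := by simp only [← mul_sum, w, sum_sum_sub_sq]; ring

theorem RelativeMeasurements.exists_involvedIn_mulVec_eq_sub {Nz M N : ℕ}
    {B : Matrix (Fin Nz) (Fin M × Fin N) ℝ} (hB : RelativeMeasurements B) (l : Fin Nz) :
    ∃ j k, InvolvedIn B j l ∧ InvolvedIn B k l ∧
      ∀ c : Fin M → ℝ, (B *ᵥ fun m => c m.1) l = c j - c k := by
  obtain ⟨j, k, hjk, hzero, -, hj, -, hk⟩ := hB l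
  have involved : ∀ u, ∑ i, B l (u, i) ≠ 0 → InvolvedIn B u l := fun u h =>
    let ⟨i, _, hi⟩ := exists_ne_zero_of_sum_ne_zero h; ⟨i, hi⟩
  refine ⟨j, k, involved j (by simp [hj]), involved k (by simp [hk]), fun c => ?_⟩
  rw [mulVec, dotProduct, Fintype.sum_prod_type, ← sum_subset (subset_univ {j, k}), sum_pair hjk]
  · simp only [← sum_mul, hj, hk]; ring
  · intro u _ hu
    simp only [mem_insert, mem_singleton, not_or] at hu
    simp [hzero (u, _) hu.1 hu.2]

theorem RelativeMeasurements.sum_sq_mulVec_comp_le {Nz M N : ℕ} {κ : Type*} [Fintype κ]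
    [DecidableEq κ] {B : Matrix (Fin Nz) (Fin M × Fin N) ℝ} (hB : RelativeMeasurements B)
    (g : Fin M → κ) (x : κ → ℝ) (C : ℝ)
    (hcross : ∀ a b, a ≠ b →
      (Nat.card {l : Fin Nz | (∃ k, g k = a ∧ InvolvedIn B k l) ∧
        (∃ k, g k = b ∧ InvolvedIn B k l)} : ℝ) ≤ C) :
    ∑ l, (B *ᵥ fun m => x (g m.1)) l ^ 2 ≤
      C * (Fintype.card κ * ∑ a, x a ^ 2 - (∑ a, x a) ^ 2) := by
  choose j k hj hk hBc using hB.exists_involvedIn_mulVec_eq_sub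
  simp only [fun l => hBc l fun u => x (g u)]
  refine sum_sq_sub_le_of_card_pair_le (g ∘ j) (g ∘ k) x C fun a b hab =>
    le_trans ?_ (hcross a b hab)
  classical
  rw [Nat.card_eq_card_toFinset]
  gcongr
  intro l
  simp only [mem_filter, mem_univ, true_and, Set.mem_toFinset, Function.comp]
  rintro (⟨ha, hb⟩ | ⟨hb, ha⟩)
  · exact ⟨⟨j l, ha, hj l⟩, k l, hb, hk l⟩
  · exact ⟨⟨k l, ha, hk l⟩, j l, hb, hj l⟩

theorem orthonormal_of_mul_transpose_eq {ι κ n : Type*} [Fintype ι] [Fintype κ] [DecidableEq κ]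
    [Nonempty κ] [DecidableEq n] (φ : ι → κ) {c : ℕ} (hc : 0 < c) (hφ : ∀ b, #{x | φ x = b} = c)
    (H : Matrix n κ ℝ) (hH : H * Hᵀ = (Fintype.card κ : ℝ) • 1)
    (y : n → EuclideanSpace ℝ ι) (hy : ∀ i x, y i x = H i (φ x) / √(Fintype.card ι)) :
    Orthonormal ℝ y := by
  have hcard : (Fintype.card ι : ℝ) = c * Fintype.card κ := by
    exact_mod_cast card_eq_mul_of_card_fiber φ hφ
  have hpos : (0 : ℝ) < Fintype.card ι := by
    rw [hcard]
    have := Fintype.card_pos (α := κ)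
    positivity
  rw [orthonormal_iff_ite]
  intro i j
  have hHij : ∑ b, H i b * H j b = Fintype.card κ * if i = j then 1 else 0 := by
    simpa [mul_apply, one_apply] using congrFun (congrFun hH i) j
  calc inner ℝ (y i) (y j) = ∑ x, H i (φ x) * H j (φ x) / Fintype.card ι := by
        simp only [PiLp.inner_apply, RCLike.inner_apply, conj_trivial, hy]
        refine sum_congr rfl fun x _ => ?_
        rw [div_mul_div_comm, Real.mul_self_sqrt hpos.le, mul_comm]
    _ = c * ∑ b, H i b * H j b / Fintype.card ι := by
        rw [sum_comp_eq_card_nsmul_sum φ hφ (fun b => H i b * H j b / Fintype.card ι),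
          nsmul_eq_mul]
    _ = if i = j then 1 else 0 := by
        rw [← sum_div, hHij, hcard]; field_simp

theorem stmt4_general (Nz M N p : ℕ) (hM : 0 < M) (hN : 0 < N) (hp : 0 < p)
    (B : Matrix (Fin Nz) (Fin M × Fin N) ℝ)
    (hB : RelativeMeasurements B)
    (g : Fin M → Fin p)
    (hg : ∀ a : Fin p, (Finset.univ.filter fun k => g k = a).card = M / p)
    (H : Matrix (Fin p) (Fin p) ℝ)
    (hHorth : H * Hᵀ = (p : ℝ) • 1)
    (hHrow : ∀ j, H ⟨0, hp⟩ j = 1)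
    (β : ℝ) (hβ : 0 ≤ β)
    (hcross : ∀ a b : Fin p, a ≠ b →
      (Nat.card {l : Fin Nz |
          (∃ k : Fin M, g k = a ∧ InvolvedIn B k l) ∧
          (∃ k : Fin M, g k = b ∧ InvolvedIn B k l)} : ℝ) ≤ β * (N * M))
    (y : Fin p → EuclideanSpace ℝ (Fin M × Fin N))
    (hy : ∀ i (m : Fin M × Fin N), y i m = H i (g m.1) / Real.sqrt (N * M)) :
    Orthonormal ℝ y ∧
    B *ᵥ (fun m => y ⟨0, hp⟩ m) = 0 ∧
    ∀ i : Fin p,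
      Real.sqrt (∑ j : Fin Nz, (B *ᵥ (fun m => y i m)) j ^ 2) ≤ p * Real.sqrt β := by
  have hn : (0 : ℝ) < N * M := by positivity
  have hy' : ∀ i, (fun m => y i m) = fun m => H i (g m.1) / √(N * M) := fun i => funext (hy i)
  have hMp : M = M / p * p := by simpa using card_eq_mul_of_card_fiber g hg
  have hfiber : ∀ a, #{m : Fin M × Fin N | g m.1 = a} = M / p * N := fun a => by
    rw [← univ_product_univ, filter_product_left (g · = a), card_product, hg, card_univ,
      Fintype.card_fin]
  have : Nonempty (Fin p) := ⟨⟨0, hp⟩⟩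
  refine ⟨orthonormal_of_mul_transpose_eq (g ∘ Prod.fst) ?_ hfiber H (by simpa using hHorth) y ?_,
    ?_, fun i => ?_⟩
  · exact Nat.mul_pos (Nat.pos_of_mul_pos_right (hMp ▸ hM)) hN
  · simpa [mul_comm] using hy
  · ext l
    obtain ⟨j, k, -, -, hBc⟩ := hB.exists_involvedIn_mulVec_eq_sub l
    rw [hy', hBc fun u => H ⟨0, hp⟩ (g u) / √(N * M), hHrow, hHrow, sub_self, Pi.zero_apply]
  have hHi : ∑ a, H i a ^ 2 = p := by
    simpa [mul_apply, sq] using congrFun (congrFun hHorth i) i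
  have hsum := hB.sum_sq_mulVec_comp_le g (fun a => H i a / √(N * M)) _ hcross
  simp only [div_pow, Real.sq_sqrt hn.le, ← sum_div, hHi, Fintype.card_fin, ← hy'] at hsum
  calc √(∑ l, (B *ᵥ fun m => y i m) l ^ 2) ≤ √(p ^ 2 * β) := by
        refine Real.sqrt_le_sqrt (hsum.trans ?_)
        calc _ = p ^ 2 * β - β * (∑ a, H i a) ^ 2 := by field_simp
          _ ≤ p ^ 2 * β := sub_le_self _ (by positivity)
    _ = p * √β := by rw [Real.sqrt_mul (by positivity), Real.sqrt_sq (by positivity)]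

/-- Key construction in the proof of Proposition 1: from a partition of the subsystems into
`p` equal groups, few sensors crossing between groups, and a `±1` Walsh/Hadamard sign matrix
`H` with all-ones first row, the group-wise constant vectors `yᵢ` (value `H_{i,a}/√n` on
group `a`) are orthonormal, satisfy `B y₁ = 0`, and `‖B yᵢ‖ ≤ p √β`. -/
theorem stmt4 (Nz M N p : ℕ) (hM : 0 < M) (hN : 0 < N) (hp : 0 < p)
    (B : Matrix (Fin Nz) (Fin M × Fin N) ℝ)
    (hB : RelativeMeasurements B)
    (g : Fin M → Fin p) (hdvd : p ∣ M)
    (hg : ∀ a : Fin p, (Finset.univ.filter fun k => g k = a).card = M / p)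
    (H : Matrix (Fin p) (Fin p) ℝ)
    (hHsign : ∀ i j, H i j = 1 ∨ H i j = -1)
    (hHorth : H * Hᵀ = (p : ℝ) • 1)
    (hHrow : ∀ j, H ⟨0, hp⟩ j = 1)
    (β : ℝ) (hβ : 0 ≤ β)
    (hcross : ∀ a b : Fin p, a ≠ b →
      (Nat.card {l : Fin Nz |
          (∃ k : Fin M, g k = a ∧ InvolvedIn B k l) ∧
          (∃ k : Fin M, g k = b ∧ InvolvedIn B k l)} : ℝ) ≤ β * (N * M))
    (y : Fin p → EuclideanSpace ℝ (Fin M × Fin N))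
    (hy : ∀ i (m : Fin M × Fin N), y i m = H i (g m.1) / Real.sqrt (N * M)) :
    Orthonormal ℝ y ∧
    B *ᵥ (fun m => y ⟨0, hp⟩ m) = 0 ∧
    ∀ i : Fin p,
      Real.sqrt (∑ j : Fin Nz, (B *ᵥ (fun m => y i m)) j ^ 2) ≤ p * Real.sqrt β :=
  stmt4_general Nz M N p hM hN hp B hB g hg H hHorth hHrow β hβ hcross y hy
end

section
/- (Proposition 2, fixed-frequency matrix form.) Let K be an invertible real n × n matrix such that every entry of K⁻¹ is bounded in absolute value by ε, where n·ε < 1. Let b ∈ {1,…,n} and let φ < −(1 + n·ε) be real, and for β ∈ [0,1] set Φ_β = β·φ·e_b e_bᵀ. Then there exists β ∈ [0,1] such that det( I_n + K(I_n + Φ_β) ) = 0. In other words, a continuously scaled rank-one sensing-model perturbation of relative size reaching φ at mode b forces the return-difference determinant through zero, so the feedback loop is not robustly stable. -/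
/-!
Factor `1 + K (1 + Φ_β) = K (K⁻¹ + 1 + Φ_β)`. Since the entries of `K⁻¹` are small,
`K⁻¹ + 1 + Φ_β` is strictly diagonally dominant for `β = 0` and `β = 1`; all diagonal entries
are positive, except the one at `b` for `β = 1`, which is negative. A strictly diagonally
dominant matrix with positive diagonal is joined to the identity through such matrices, which
are nonsingular by Gershgorin, so its determinant is positive; negating one row shows that the
determinant at `β = 1` is negative. The intermediate value theorem then gives the `β`.
-/

open Matrix Finset

variable {ι : Type*} [Fintype ι] [DecidableEq ι]

namespace Matrix

theorem det_pos_of_sum_row_lt_diag {A : Matrix ι ι ℝ}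
    (h : ∀ i, ∑ j ∈ univ.erase i, |A i j| < A i i) : 0 < A.det := by
  set f : ℝ → ℝ := fun t => ((1 - t) • (1 : Matrix ι ι ℝ) + t • A).det
  have hf : Continuous f := by fun_prop
  -- Each matrix on the segment from `1` to `A` is still strictly diagonally dominant.
  have hf_ne : ∀ t ∈ Set.Icc (0 : ℝ) 1, f t ≠ 0 := by
    intro t ⟨ht₀, ht₁⟩
    apply det_ne_zero_of_sum_row_lt_diag
    intro i
    have hoff : ∀ j ∈ univ.erase i, ‖((1 - t) • (1 : Matrix ι ι ℝ) + t • A) i j‖ = t * |A i j| :=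
      fun j hj => by
        simp [one_apply_ne' (ne_of_mem_erase hj), abs_of_nonneg ht₀]
    have hdiag : ‖((1 - t) • (1 : Matrix ι ι ℝ) + t • A) i i‖ = (1 - t) + t * A i i := by
      have := (sum_nonneg fun j _ => abs_nonneg (A i j)).trans_lt (h i)
      simp only [add_apply, smul_apply, one_apply_eq, smul_eq_mul, mul_one, Real.norm_eq_abs]
      exact abs_of_nonneg (by nlinarith)
    rw [sum_congr rfl hoff, ← mul_sum, hdiag]
    rcases ht₀.eq_or_lt with rfl | ht_pos
    · simp
    · nlinarith [mul_lt_mul_of_pos_left (h i) ht_pos]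
  by_contra! hA
  have hf₁ : f 1 < 0 := by
    simpa [f] using lt_of_le_of_ne hA (by simpa [f] using hf_ne 1 (by simp))
  obtain ⟨t, ht, hft⟩ :=
    intermediate_value_Icc' zero_le_one hf.continuousOn ⟨hf₁.le, by simp [f]⟩
  exact hf_ne t ht hft

theorem det_neg_of_sum_row_lt_diag_of_sum_row_lt_neg_diag {A : Matrix ι ι ℝ} (b : ι)
    (hb : ∑ j ∈ univ.erase b, |A b j| < -A b b)
    (h : ∀ i ≠ b, ∑ j ∈ univ.erase i, |A i j| < A i i) : A.det < 0 := by
  have hpos : 0 < (A.updateRow b ((-1 : ℝ) • A b)).det := by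
    refine det_pos_of_sum_row_lt_diag fun i => ?_
    rcases eq_or_ne i b with rfl | hi
    · simpa using hb
    · simpa [updateRow_ne hi] using h i hi
  rw [det_updateRow_smul, updateRow_eq_self] at hpos
  linarith

theorem sum_erase_abs_le_of_abs_le {M : Matrix ι ι ℝ} {ε : ℝ} (hM : ∀ j k, |M j k| ≤ ε)
    (i : ι) : ∑ j ∈ univ.erase i, |M i j| ≤ ((Fintype.card ι : ℝ) - 1) * ε := by
  calc ∑ j ∈ univ.erase i, |M i j| ≤ ∑ _j ∈ univ.erase i, ε := sum_le_sum fun j _ => hM i j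
    _ = ((Fintype.card ι : ℝ) - 1) * ε := by
      rw [sum_const, card_erase_of_mem (mem_univ i), card_univ, nsmul_eq_mul,
        Nat.cast_sub (Fintype.card_pos_iff.2 ⟨i⟩)]
      simp

theorem sum_erase_abs_add_diagonal (M : Matrix ι ι ℝ) (d : ι → ℝ) (i : ι) :
    ∑ j ∈ univ.erase i, |(M + diagonal d) i j| = ∑ j ∈ univ.erase i, |M i j| :=
  sum_congr rfl fun j hj => by simp [diagonal_apply_ne' _ (ne_of_mem_erase hj)]

variable {M : Matrix ι ι ℝ} {ε : ℝ} {d : ι → ℝ}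

theorem det_add_diagonal_pos (hM : ∀ j k, |M j k| ≤ ε)
    (hε : (Fintype.card ι : ℝ) * ε < 1) (hd : ∀ i, 1 ≤ d i) : 0 < (M + diagonal d).det := by
  refine det_pos_of_sum_row_lt_diag fun i => ?_
  rw [sum_erase_abs_add_diagonal]
  have := sum_erase_abs_le_of_abs_le hM i
  have := (abs_le.1 (hM i i)).1
  simp only [add_apply, diagonal_apply_eq]
  linarith [hd i]

theorem det_add_diagonal_neg (hM : ∀ j k, |M j k| ≤ ε)
    (hε : (Fintype.card ι : ℝ) * ε < 1) (b : ι) (hb : d b < -((Fintype.card ι : ℝ) * ε))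
    (hd : ∀ i ≠ b, 1 ≤ d i) : (M + diagonal d).det < 0 := by
  refine det_neg_of_sum_row_lt_diag_of_sum_row_lt_neg_diag b ?_ fun i hi => ?_ <;>
    (rw [sum_erase_abs_add_diagonal]; simp only [add_apply, diagonal_apply_eq])
  · linarith [sum_erase_abs_le_of_abs_le hM b, (abs_le.1 (hM b b)).2]
  · linarith [sum_erase_abs_le_of_abs_le hM i, (abs_le.1 (hM i i)).1, hd i hi]

end Matrix

/-- Proposition 2, fixed-frequency matrix form: if `K` is invertible with all entries of
`K⁻¹` bounded by `ε`, `n ε < 1`, and `φ < -(1 + n ε)`, then scaling the rank-one sensing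
perturbation `Φ_β = β φ e_b e_bᵀ` from `β = 0` to `β = 1` forces the return-difference
determinant `det (I + K (I + Φ_β))` through zero: the loop is not robustly stable. -/
theorem stmt8 (n : ℕ) (K : Matrix (Fin n) (Fin n) ℝ) (hK : IsUnit K)
    (ε : ℝ) (hε : ∀ j k, |K⁻¹ j k| ≤ ε) (hnε : (n : ℝ) * ε < 1)
    (b : Fin n) (φ : ℝ) (hφ : φ < -(1 + (n : ℝ) * ε)) :
    ∃ β ∈ Set.Icc (0 : ℝ) 1,
      (1 + K * (1 + Matrix.single b b (β * φ))).det = 0 := by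
  have hfactor : ∀ β : ℝ, 1 + K * (1 + single b b (β * φ)) =
      K * (K⁻¹ + diagonal (1 + Pi.single b (β * φ))) := fun β => by
    rw [← diagonal_single, ← diagonal_one', diagonal_add, mul_add K K⁻¹,
      mul_nonsing_inv K ((isUnit_iff_isUnit_det K).1 hK)]
    rfl
  set g : ℝ → ℝ := fun β => (K⁻¹ + diagonal (1 + Pi.single b (β * φ))).det
  have hg : Continuous g := (continuous_const.add (continuous_const.add
    ((continuous_single b).comp (continuous_id.mul continuous_const))).matrix_diagonal).matrix_det
  have hg₀ : 0 < g 0 := det_add_diagonal_pos hε (by simpa using hnε) fun i => by simp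
  have hg₁ : g 1 < 0 := by
    refine det_add_diagonal_neg hε (by simpa using hnε) b (by
      simp only [one_mul, Pi.add_apply, Pi.one_apply, Pi.single_eq_same, Fintype.card_fin]
      linarith) fun i hi => ?_
    simp [hi]
  obtain ⟨β, hβ, hgβ⟩ := intermediate_value_Icc' zero_le_one hg.continuousOn ⟨hg₁.le, hg₀.le⟩
  exact ⟨β, hβ, by rw [hfactor, det_mul]; exact mul_eq_zero_of_right _ hgβ⟩
end

section
/- (Lemma 3, spatially invariant sensing error symbol.) Fix γ ≥ 1, integers M₁,…,M_γ ≥ 1, D = (ℤ/M₁ℤ)×⋯×(ℤ/M_γℤ), a finite set 𝓛₀ ⊂ ℤ^γ of nonzero offsets, and ε > 0. Let B be the local relative sensing matrix with rows B_{(k,l),m} = [m = k] − [m = k+l] for (k,l) ∈ D×𝓛₀, and let Δ be the symmetry-breaking spatially invariant error with rows Δ_{(k,l),m} = ε([m = k] + [m = k+l]). For any integer tuple (k₁,…,k_γ), set ξ_j = 2π k_j/M_j and (v_ξ)_m = exp(i Σ_j m_j ξ_j). Then (Bᵀ Δ) v_ξ = ( 2 i ε Σ_{l∈𝓛₀} sin(lᵀξ)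 ) · v_ξ; consequently, whenever λ_ξ = 4 Σ_{l∈𝓛₀} sin²(lᵀξ/2) ≠ 0, one has (Bᵀ Δ) v_ξ = Φ̄_ξ · (BᵀB) v_ξ with the purely imaginary number Φ̄_ξ = i ε Σ_{l∈𝓛₀} sin(lᵀξ) / ( 2 Σ_{l∈𝓛₀} sin²(lᵀξ/2) ). -/
open Matrix

lemma stmt13_shift {γ : ℕ} {M : Fin γ → ℕ} [∀ j, NeZero (M j)]
    (kk : Fin γ → ℤ) (ξ : Fin γ → ℝ) (hξ : ∀ j, ξ j = 2 * Real.pi * (kk j) / (M j))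
    (v : ((j : Fin γ) → ZMod (M j)) → ℂ)
    (hv : ∀ m, v m = Complex.exp (Complex.I * ((∑ j, ((m j).val : ℝ) * ξ j) : ℝ)))
    (m : (j : Fin γ) → ZMod (M j)) (l : Fin γ → ℤ) :
    v (m + fun j => ((l j : ZMod (M j))))
      = Complex.exp (Complex.I * ((∑ j, (l j : ℝ) * ξ j : ℝ))) * v m := by
  have hd : ∀ j, ∃ d : ℤ, (((m j + (l j : ZMod (M j))).val : ℤ))
      = (m j).val + l j + (M j) * d := by
    intro j
    have h0 : ((((m j + (l j : ZMod (M j))).val : ℤ) - ((m j).val : ℤ) - l j : ℤ)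
        : ZMod (M j)) = 0 := by
      push_cast [ZMod.natCast_val, ZMod.cast_id]
      ring
    rw [ZMod.intCast_zmod_eq_zero_iff_dvd] at h0
    obtain ⟨d, hdd⟩ := h0
    exact ⟨d, by linarith [hdd]⟩
  choose d hdeq using hd
  rw [hv, hv, ← Complex.exp_add]
  have hA : (∑ j, (((m + fun j => ((l j : ZMod (M j)))) j).val : ℝ) * ξ j)
      = (∑ j, (l j : ℝ) * ξ j) + (∑ j, ((m j).val : ℝ) * ξ j)
        + ((∑ j, d j * kk j : ℤ) : ℝ) * (2 * Real.pi) := by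
    have hterm : ∀ j ∈ Finset.univ, (((m + fun j => ((l j : ZMod (M j)))) j).val : ℝ) * ξ j
        = (l j : ℝ) * ξ j + ((m j).val : ℝ) * ξ j + ((d j * kk j : ℤ) : ℝ) * (2 * Real.pi) := by
      intro j _
      have hMne : (M j : ℝ) ≠ 0 := Nat.cast_ne_zero.mpr (NeZero.ne _)
      have hj : (((m j + (l j : ZMod (M j))).val : ℝ))
          = ((m j).val : ℝ) + (l j : ℝ) + (M j : ℝ) * (d j : ℝ) := by
        exact_mod_cast congrArg (Int.cast : ℤ → ℝ) (hdeq j)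
      rw [Pi.add_apply]
      rw [hj, hξ j]
      push_cast
      field_simp
      ring
    rw [Finset.sum_congr rfl hterm, Finset.sum_add_distrib, Finset.sum_add_distrib]
    congr 1
    push_cast
    rw [Finset.sum_mul]
  have hIA : (Complex.I * ((∑ j, (((m + fun j => ((l j : ZMod (M j)))) j).val : ℝ) * ξ j : ℝ)) : ℂ)
      = (Complex.I * ((∑ j, (l j : ℝ) * ξ j : ℝ)) + Complex.I * ((∑ j, ((m j).val : ℝ) * ξ j : ℝ)))
        + ((∑ j, d j * kk j : ℤ) : ℂ) * (2 * (Real.pi : ℂ) * Complex.I) := by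
    rw [hA]
    push_cast
    ring
  rw [hIA, Complex.exp_add, Complex.exp_int_mul_two_pi_mul_I, mul_one]
lemma stmt13_esin (z : ℂ) :
    Complex.exp (z * Complex.I) - Complex.exp (-z * Complex.I) = 2 * Complex.I * Complex.sin z := by
  have h := Complex.two_sin z
  linear_combination (-Complex.I) * h
    - (Complex.exp (-z * Complex.I) - Complex.exp (z * Complex.I)) * Complex.I_sq

lemma stmt13_ecos (z : ℂ) :
    Complex.exp (z * Complex.I) + Complex.exp (-z * Complex.I) = 2 * Complex.cos z := by
  rw [Complex.cos]; ring

/-- Lemma 3, spatially invariant sensing error symbol: for the torus sensing matrix `B`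
(rows `[m = k] - [m = k+l]`) and the symmetry-breaking spatially invariant error `Δ`
(rows `ε([m = k] + [m = k+l])`), the Fourier vector `v_ξ` satisfies
`(Bᵀ Δ) v_ξ = (2 i ε Σ_l sin(lᵀξ)) v_ξ`; hence whenever `λ_ξ = 4 Σ_l sin²(lᵀξ/2) ≠ 0`,
`(Bᵀ Δ) v_ξ = Φ̄_ξ (Bᵀ B) v_ξ` with the purely imaginary
`Φ̄_ξ = i ε Σ_l sin(lᵀξ) / (2 Σ_l sin²(lᵀξ/2))`. -/
theorem stmt13 (γ : ℕ) (hγ : 1 ≤ γ) (M : Fin γ → ℕ) [∀ j, NeZero (M j)]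
    (L0 : Finset (Fin γ → ℤ)) (hL0 : ∀ l ∈ L0, l ≠ 0) (ε : ℝ) (hε : 0 < ε)
    (B Δ : Matrix (((j : Fin γ) → ZMod (M j)) × L0) ((j : Fin γ) → ZMod (M j)) ℝ)
    (hB : ∀ (q : ((j : Fin γ) → ZMod (M j)) × L0) (m : (j : Fin γ) → ZMod (M j)),
      B q m = (if m = q.1 then (1 : ℝ) else 0)
        - (if m = q.1 + (fun j => (((q.2 : Fin γ → ℤ) j : ZMod (M j)))) then (1 : ℝ) else 0))
    (hΔ : ∀ (q : ((j : Fin γ) → ZMod (M j)) × L0) (m : (j : Fin γ) → ZMod (M j)),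
      Δ q m = ε * ((if m = q.1 then (1 : ℝ) else 0)
        + (if m = q.1 + (fun j => (((q.2 : Fin γ → ℤ) j : ZMod (M j)))) then (1 : ℝ) else 0)))
    (kk : Fin γ → ℤ) (ξ : Fin γ → ℝ) (hξ : ∀ j, ξ j = 2 * Real.pi * (kk j) / (M j))
    (v : ((j : Fin γ) → ZMod (M j)) → ℂ)
    (hv : ∀ m, v m = Complex.exp (Complex.I * ((∑ j, ((m j).val : ℝ) * ξ j) : ℝ))) :
    ((Bᵀ * Δ).map fun x => (x : ℂ)) *ᵥ v
      = ((2 * Complex.I * (ε : ℂ) * ((∑ l ∈ L0, Real.sin (∑ j, (l j : ℝ) * ξ j) : ℝ) : ℂ))) • v ∧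
    ((4 * ∑ l ∈ L0, Real.sin ((∑ j, (l j : ℝ) * ξ j) / 2) ^ 2 : ℝ) ≠ 0 →
      ((Bᵀ * Δ).map fun x => (x : ℂ)) *ᵥ v
        = (Complex.I * (ε : ℂ) *
            ((∑ l ∈ L0, Real.sin (∑ j, (l j : ℝ) * ξ j) : ℝ) : ℂ) /
            ((2 * ∑ l ∈ L0, Real.sin ((∑ j, (l j : ℝ) * ξ j) / 2) ^ 2 : ℝ) : ℂ)) •
          (((Bᵀ * B).map fun x => (x : ℂ)) *ᵥ v)) := by
  classical
  -- abbreviations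
  set S : ℝ := ∑ l ∈ L0, Real.sin (∑ j, (l j : ℝ) * ξ j) with hS
  set T : ℝ := ∑ l ∈ L0, Real.sin ((∑ j, (l j : ℝ) * ξ j) / 2) ^ 2 with hT
  have key := stmt13_shift kk ξ hξ v hv
  -- map of product
  have hmapmul : ∀ (P Q : Matrix ((((j : Fin γ) → ZMod (M j))) × L0) ((j : Fin γ) → ZMod (M j)) ℝ),
      ((Pᵀ * Q).map fun x => (x : ℂ)) *ᵥ v
        = (Pᵀ.map fun x => (x : ℂ)) *ᵥ ((Q.map fun x => (x : ℂ)) *ᵥ v) := by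
    intro P Q
    have hm : ((Pᵀ * Q).map fun x => (x : ℂ))
        = (Pᵀ.map fun x => (x : ℂ)) * (Q.map fun x => (x : ℂ)) :=
      Matrix.map_mul (f := Complex.ofRealHom)
    rw [Matrix.mulVec_mulVec, hm]
  -- Δ action
  have hDv : ((Δ.map fun x => (x : ℂ)) *ᵥ v)
      = fun q : (((j : Fin γ) → ZMod (M j))) × L0 =>
          (ε : ℂ) * (v q.1 + v (q.1 + fun j => (((q.2 : Fin γ → ℤ) j : ZMod (M j))))) := by
    funext q
    simp only [Matrix.mulVec, dotProduct, Matrix.map_apply, hΔ]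
    calc (∑ n, (((ε * ((if n = q.1 then (1:ℝ) else 0)
            + (if n = q.1 + fun j => (((q.2 : Fin γ → ℤ) j : ZMod (M j))) then (1:ℝ) else 0))) : ℝ) : ℂ) * v n)
        = ∑ n, (ε : ℂ) * ((if n = q.1 then v n else 0)
            + (if n = q.1 + fun j => (((q.2 : Fin γ → ℤ) j : ZMod (M j))) then v n else 0)) := by
          refine Finset.sum_congr rfl fun n _ => ?_
          push_cast
          split_ifs <;> push_cast <;> ring
      _ = (ε : ℂ) * ((∑ n, if n = q.1 then v n else 0)
            + ∑ n, if n = q.1 + fun j => (((q.2 : Fin γ → ℤ) j : ZMod (M j))) then v n else 0) := by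
          rw [← Finset.sum_add_distrib, ← Finset.mul_sum]
      _ = (ε : ℂ) * (v q.1 + v (q.1 + fun j => (((q.2 : Fin γ → ℤ) j : ZMod (M j))))) := by
          rw [Finset.sum_ite_eq', Finset.sum_ite_eq']
          simp
  -- B action
  have hBv : ((B.map fun x => (x : ℂ)) *ᵥ v)
      = fun q : (((j : Fin γ) → ZMod (M j))) × L0 =>
          (v q.1 - v (q.1 + fun j => (((q.2 : Fin γ → ℤ) j : ZMod (M j))))) := by
    funext q
    simp only [Matrix.mulVec, dotProduct, Matrix.map_apply, hB]
    calc (∑ n, ((((if n = q.1 then (1:ℝ) else 0)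
            - (if n = q.1 + fun j => (((q.2 : Fin γ → ℤ) j : ZMod (M j))) then (1:ℝ) else 0)) : ℝ) : ℂ) * v n)
        = ∑ n, ((if n = q.1 then v n else 0)
            - (if n = q.1 + fun j => (((q.2 : Fin γ → ℤ) j : ZMod (M j))) then v n else 0)) := by
          refine Finset.sum_congr rfl fun n _ => ?_
          push_cast
          split_ifs <;> push_cast <;> ring
      _ = (v q.1 - v (q.1 + fun j => (((q.2 : Fin γ → ℤ) j : ZMod (M j))))) := by
          rw [Finset.sum_sub_distrib, Finset.sum_ite_eq', Finset.sum_ite_eq']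
          simp
  -- Bᵀ action
  have hBt : ∀ (w : ((((j : Fin γ) → ZMod (M j))) × L0) → ℂ) (m : ((j : Fin γ) → ZMod (M j))),
      (((Bᵀ).map fun x => (x : ℂ)) *ᵥ w) m
        = ∑ l : L0, (w (m, l) - w (m - (fun j => (((l : Fin γ → ℤ) j : ZMod (M j)))), l)) := by
    intro w m
    simp only [Matrix.mulVec, dotProduct, Matrix.map_apply, Matrix.transpose_apply, hB]
    rw [Fintype.sum_prod_type, Finset.sum_comm]
    refine Finset.sum_congr rfl fun l _ => ?_
    calc (∑ k, ((((if m = k then (1:ℝ) else 0)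
            - (if m = k + fun j => (((l : Fin γ → ℤ) j : ZMod (M j))) then (1:ℝ) else 0)) : ℝ) : ℂ) * w (k, l))
        = ∑ k, ((if m = k then w (k, l) else 0)
            - (if k = m - fun j => (((l : Fin γ → ℤ) j : ZMod (M j))) then w (k, l) else 0)) := by
          refine Finset.sum_congr rfl fun k _ => ?_
          have hc : (m = k + fun j => (((l : Fin γ → ℤ) j : ZMod (M j))))
              ↔ (k = m - fun j => (((l : Fin γ → ℤ) j : ZMod (M j)))) := by
            rw [eq_sub_iff_add_eq, eq_comm]
          rw [if_congr hc rfl rfl]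
          push_cast
          split_ifs <;> push_cast <;> ring
      _ = (w (m, l) - w (m - (fun j => (((l : Fin γ → ℤ) j : ZMod (M j)))), l)) := by
          rw [Finset.sum_sub_distrib, Finset.sum_ite_eq, Finset.sum_ite_eq']
          simp
  -- shifted harmonics: difference and sum
  have hneg : ∀ (m : (j : Fin γ) → ZMod (M j)) (l : Fin γ → ℤ),
      (m + fun j => (((-l) j : ℤ) : ZMod (M j))) = m - fun j => ((l j : ZMod (M j))) := by
    intro m l
    funext j
    simp [sub_eq_add_neg]
  have hnegsum : ∀ l : Fin γ → ℤ, (∑ j, ((-l) j : ℝ) * ξ j) = -(∑ j, (l j : ℝ) * ξ j) := by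
    intro l
    rw [← Finset.sum_neg_distrib]
    refine Finset.sum_congr rfl fun j _ => ?_
    simp only [Pi.neg_apply]
    push_cast
    ring
  have hsin : ∀ (l : Fin γ → ℤ) (m : (j : Fin γ) → ZMod (M j)),
      v (m + fun j => ((l j : ZMod (M j)))) - v (m - fun j => ((l j : ZMod (M j))))
        = 2 * Complex.I * ((Real.sin (∑ j, (l j : ℝ) * ξ j) : ℝ) : ℂ) * v m := by
    intro l m
    have h1 := key m l
    have h2 := key m (-l)
    rw [hneg m l, hnegsum l] at h2
    rw [h1, h2, Complex.ofReal_neg, Complex.ofReal_sin]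
    have e : Complex.I * (((∑ j, (l j : ℝ) * ξ j : ℝ)) : ℂ)
        = (((∑ j, (l j : ℝ) * ξ j : ℝ)) : ℂ) * Complex.I := mul_comm _ _
    have e2 : Complex.I * -(((∑ j, (l j : ℝ) * ξ j : ℝ)) : ℂ)
        = -(((∑ j, (l j : ℝ) * ξ j : ℝ)) : ℂ) * Complex.I := by ring
    rw [e, e2, ← sub_mul, stmt13_esin]
  have hcos : ∀ (l : Fin γ → ℤ) (m : (j : Fin γ) → ZMod (M j)),
      v (m + fun j => ((l j : ZMod (M j)))) + v (m - fun j => ((l j : ZMod (M j))))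
        = 2 * ((Real.cos (∑ j, (l j : ℝ) * ξ j) : ℝ) : ℂ) * v m := by
    intro l m
    have h1 := key m l
    have h2 := key m (-l)
    rw [hneg m l, hnegsum l] at h2
    rw [h1, h2, Complex.ofReal_neg, Complex.ofReal_cos]
    have e : Complex.I * (((∑ j, (l j : ℝ) * ξ j : ℝ)) : ℂ)
        = (((∑ j, (l j : ℝ) * ξ j : ℝ)) : ℂ) * Complex.I := mul_comm _ _
    have e2 : Complex.I * -(((∑ j, (l j : ℝ) * ξ j : ℝ)) : ℂ)
        = -(((∑ j, (l j : ℝ) * ξ j : ℝ)) : ℂ) * Complex.I := by ring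
    rw [e, e2, ← add_mul, stmt13_ecos]
  -- part 1
  have main1 : ((Bᵀ * Δ).map fun x => (x : ℂ)) *ᵥ v
      = ((2 * Complex.I * (ε : ℂ) * ((S : ℝ) : ℂ))) • v := by
    rw [hmapmul B Δ, hDv]
    funext m
    rw [hBt]
    have step : ∀ l : L0,
        ((ε : ℂ) * (v m + v (m + fun j => (((l : Fin γ → ℤ) j : ZMod (M j)))))
          - (ε : ℂ) * (v ((m - fun j => (((l : Fin γ → ℤ) j : ZMod (M j)))))
              + v ((m - fun j => (((l : Fin γ → ℤ) j : ZMod (M j))))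
                  + fun j => (((l : Fin γ → ℤ) j : ZMod (M j))))))
          = (ε : ℂ) * (2 * Complex.I * ((Real.sin (∑ j, ((l : Fin γ → ℤ) j : ℝ) * ξ j) : ℝ) : ℂ) * v m) := by
      intro l
      rw [sub_add_cancel]
      rw [← hsin (l : Fin γ → ℤ) m]
      ring
    rw [Finset.sum_congr rfl fun l _ => step l]
    have hsumS : ((S : ℝ) : ℂ)
        = ∑ l : L0, ((Real.sin (∑ j, ((l : Fin γ → ℤ) j : ℝ) * ξ j) : ℝ) : ℂ) := by
      rw [hS, ← Finset.sum_coe_sort L0 (fun l => Real.sin (∑ j, (l j : ℝ) * ξ j))]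
      exact map_sum Complex.ofRealHom _ _
    rw [← Finset.mul_sum, ← Finset.sum_mul, ← Finset.mul_sum, ← hsumS]
    simp only [Pi.smul_apply, smul_eq_mul]
    ring
  -- BᵀB action
  have hBB : ((Bᵀ * B).map fun x => (x : ℂ)) *ᵥ v = (((4 * T : ℝ)) : ℂ) • v := by
    rw [hmapmul B B, hBv]
    funext m
    rw [hBt]
    have step : ∀ l : L0,
        ((v m - v (m + fun j => (((l : Fin γ → ℤ) j : ZMod (M j)))))
          - (v ((m - fun j => (((l : Fin γ → ℤ) j : ZMod (M j)))))
              - v ((m - fun j => (((l : Fin γ → ℤ) j : ZMod (M j))))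
                  + fun j => (((l : Fin γ → ℤ) j : ZMod (M j))))))
          = (2 - 2 * ((Real.cos (∑ j, ((l : Fin γ → ℤ) j : ℝ) * ξ j) : ℝ) : ℂ)) * v m := by
      intro l
      rw [sub_add_cancel]
      have := hcos (l : Fin γ → ℤ) m
      linear_combination -this
    rw [Finset.sum_congr rfl fun l _ => step l]
    have hreal : ∀ x : ℝ, 4 * Real.sin (x / 2) ^ 2 = 2 - 2 * Real.cos x := by
      intro x
      have h := Real.cos_sq (x / 2)
      rw [show 2 * (x / 2) = x by ring] at h
      have h2 := Real.sin_sq_add_cos_sq (x / 2)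
      linarith
    have hC : ∀ x : ℝ, ((2 : ℂ) - 2 * ((Real.cos x : ℝ) : ℂ)) = ((4 * Real.sin (x / 2) ^ 2 : ℝ) : ℂ) := by
      intro x
      have h2 : ((2 - 2 * Real.cos x : ℝ) : ℂ) = 2 - 2 * ((Real.cos x : ℝ) : ℂ) := by
        rw [Complex.ofReal_sub, Complex.ofReal_mul, Complex.ofReal_ofNat]
      rw [← hreal x] at h2
      exact h2.symm
    have hsumT : ((4 * T : ℝ) : ℂ)
        = ∑ l : L0, ((4 * Real.sin ((∑ j, ((l : Fin γ → ℤ) j : ℝ) * ξ j) / 2) ^ 2 : ℝ) : ℂ) := by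
      rw [hT, Finset.mul_sum,
        ← Finset.sum_coe_sort L0 (fun l => 4 * Real.sin ((∑ j, (l j : ℝ) * ξ j) / 2) ^ 2)]
      exact map_sum Complex.ofRealHom _ _
    rw [Finset.sum_congr rfl fun l _ => by rw [hC]]
    rw [← Finset.sum_mul, ← hsumT]
    simp only [Pi.smul_apply, smul_eq_mul]
  refine ⟨main1, fun hne => ?_⟩
  have hTc : ((T : ℝ) : ℂ) ≠ 0 := by
    rw [Complex.ofReal_ne_zero]
    intro h0
    exact hne (by rw [h0]; ring)
  rw [hBB, main1, smul_smul]
  congr 1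
  push_cast
  field_simp
  ring
end

section
/- Let γ ≥ 1, let 𝓛₀ ⊂ ℤ^γ be finite and nonempty, and let w ∈ ℝ^γ be such that Σ_{l∈𝓛₀} (lᵀw)² ≠ 0. Then lim_{t→0} t · ( Σ_{l∈𝓛₀} sin(t·lᵀw) ) / ( 2 Σ_{l∈𝓛₀} sin²(t·lᵀw/2) ) = 2 (Σ_{l∈𝓛₀} lᵀw) / (Σ_{l∈𝓛₀} (lᵀw)²). In particular, if Σ_{l∈𝓛₀} lᵀw ≠ 0, then for every ε > 0 the modulus of Φ̄(t) = i ε (Σ_{l∈𝓛₀} sin(t·lᵀw)) / (2 Σ_{l∈𝓛₀} sin²(t·lᵀw/2)) tends to +∞ as t → 0 with t ≠ 0. -/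
/-!
Since `sin x ~ x`, the numerator `Σ sin(t aₗ)` behaves like `t Σ aₗ` and the denominator
`2 Σ sin²(t aₗ / 2)` like `t² (Σ aₗ²) / 2`. Hence `t · Φ̄(t) / (i ε)` has the finite nonzero limit
`2 (Σ aₗ) / (Σ aₗ²)`, which forces `|Φ̄(t)| ~ ε |2 (Σ aₗ) / (Σ aₗ²)| / |t| → ∞`.
-/

open Filter Topology

namespace SensingError

lemma tendsto_sin_mul_div_self (a : ℝ) :
    Tendsto (fun t : ℝ => Real.sin (t * a) / t) (𝓝[≠] 0) (𝓝 a) := by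
  have hderiv : HasDerivAt (fun t : ℝ => Real.sin (t * a)) a 0 := by
    simpa using ((hasDerivAt_id (0 : ℝ)).mul_const a).sin
  refine (hasDerivAt_iff_tendsto_slope.mp hderiv).congr fun t => ?_
  simp [slope_def_field]

variable {ι : Type*} (s : Finset ι) (a : ι → ℝ)

lemma tendsto_sum_sin_div_self :
    Tendsto (fun t : ℝ => (∑ i ∈ s, Real.sin (t * a i)) / t) (𝓝[≠] 0) (𝓝 (∑ i ∈ s, a i)) := by
  simpa only [Finset.sum_div] using
    tendsto_finsetSum s fun i _ => tendsto_sin_mul_div_self (a i)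

lemma tendsto_two_mul_sum_sin_half_sq_div_sq :
    Tendsto (fun t : ℝ => (2 * ∑ i ∈ s, Real.sin (t * a i / 2) ^ 2) / t ^ 2) (𝓝[≠] 0)
      (𝓝 ((∑ i ∈ s, a i ^ 2) / 2)) := by
  have hterm : ∀ i ∈ s, Tendsto (fun t : ℝ => 2 * (Real.sin (t * (a i / 2)) / t) ^ 2)
      (𝓝[≠] 0) (𝓝 (2 * (a i / 2) ^ 2)) :=
    fun i _ => ((tendsto_sin_mul_div_self (a i / 2)).pow 2).const_mul 2
  have hlim : ∑ i ∈ s, 2 * (a i / 2) ^ 2 = (∑ i ∈ s, a i ^ 2) / 2 := by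
    rw [Finset.sum_div]
    exact Finset.sum_congr rfl fun i _ => by ring
  rw [← hlim]
  refine (tendsto_finsetSum s hterm).congr fun t => ?_
  simp only [Finset.mul_sum, Finset.sum_div, div_pow, mul_div_assoc]

lemma tendsto_mul_sum_sin_div_two_mul_sum_sin_half_sq (hB : ∑ i ∈ s, a i ^ 2 ≠ 0) :
    Tendsto (fun t : ℝ =>
        t * (∑ i ∈ s, Real.sin (t * a i)) / (2 * ∑ i ∈ s, Real.sin (t * a i / 2) ^ 2))
      (𝓝[≠] 0) (𝓝 (2 * (∑ i ∈ s, a i) / ∑ i ∈ s, a i ^ 2)) := by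
  have hquot := (tendsto_sum_sin_div_self s a).div
    (tendsto_two_mul_sum_sin_half_sq_div_sq s a) (div_ne_zero hB two_ne_zero)
  rw [div_div_eq_mul_div, mul_comm] at hquot
  refine hquot.congr' ?_
  filter_upwards [self_mem_nhdsWithin] with t (ht : t ≠ 0)
  rcases eq_or_ne (2 * ∑ i ∈ s, Real.sin (t * a i / 2) ^ 2) 0 with hD | hD
  · simp [hD]
  · rw [Pi.div_apply]
    field_simp

end SensingError

lemma tendsto_abs_atTop_of_tendsto_mul_self {f : ℝ → ℝ} {c : ℝ} (hc : c ≠ 0)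
    (hf : Tendsto (fun t => t * f t) (𝓝[≠] 0) (𝓝 c)) :
    Tendsto (fun t => |f t|) (𝓝[≠] 0) atTop := by
  have hinv : Tendsto (fun t : ℝ => |t|⁻¹) (𝓝[≠] 0) atTop :=
    tendsto_inv_nhdsGT_zero.comp tendsto_abs_nhdsNE_zero
  refine (Tendsto.pos_mul_atTop (abs_pos.mpr hc) hf.abs hinv).congr' ?_
  filter_upwards [self_mem_nhdsWithin] with t (ht : t ≠ 0)
  rw [abs_mul, mul_comm |t|, mul_assoc, mul_inv_cancel₀ (abs_ne_zero.mpr ht), mul_one]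

theorem stmt15_general (γ : ℕ) (L0 : Finset (Fin γ → ℤ))
    (w : Fin γ → ℝ) (hw : (∑ l ∈ L0, (∑ j, (l j : ℝ) * w j) ^ 2) ≠ 0) :
    Tendsto (fun t : ℝ =>
        t * (∑ l ∈ L0, Real.sin (t * ∑ j, (l j : ℝ) * w j)) /
          (2 * ∑ l ∈ L0, Real.sin (t * (∑ j, (l j : ℝ) * w j) / 2) ^ 2))
      (nhdsWithin 0 {0}ᶜ)
      (nhds (2 * (∑ l ∈ L0, ∑ j, (l j : ℝ) * w j) /
        (∑ l ∈ L0, (∑ j, (l j : ℝ) * w j) ^ 2))) ∧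
    ((∑ l ∈ L0, ∑ j, (l j : ℝ) * w j) ≠ 0 → ∀ ε : ℝ, 0 < ε →
      Tendsto (fun t : ℝ =>
          ‖Complex.I * (ε : ℂ) *
              ((∑ l ∈ L0, Real.sin (t * ∑ j, (l j : ℝ) * w j) : ℝ) : ℂ) /
              ((2 * ∑ l ∈ L0, Real.sin (t * (∑ j, (l j : ℝ) * w j) / 2) ^ 2 : ℝ) : ℂ)‖)
        (nhdsWithin 0 {0}ᶜ) atTop) := by
  set a : (Fin γ → ℤ) → ℝ := fun l => ∑ j, (l j : ℝ) * w j
  have hlim := SensingError.tendsto_mul_sum_sin_div_two_mul_sum_sin_half_sq L0 a hw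
  refine ⟨hlim, fun hA ε hε => ?_⟩
  have hblow := tendsto_abs_atTop_of_tendsto_mul_self
    (div_ne_zero (mul_ne_zero two_ne_zero hA) hw) (hlim.congr fun t => mul_div_assoc _ _ _)
  refine (hblow.const_mul_atTop hε).congr fun t => ?_
  rw [norm_div, norm_mul, norm_mul, Complex.norm_I, Complex.norm_real, Complex.norm_real,
    Complex.norm_real, Real.norm_eq_abs, Real.norm_eq_abs, Real.norm_eq_abs, abs_of_pos hε,
    one_mul, mul_div_assoc, abs_div]

/-- Analytic core of Proposition 3: along the ray of spatial frequencies `ξ = t w`, the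
ratio `t (Σ_l sin(t lᵀw)) / (2 Σ_l sin²(t lᵀw / 2))` tends to
`2 (Σ_l lᵀw) / (Σ_l (lᵀw)²)` as `t → 0`; hence if `Σ_l lᵀw ≠ 0` the modulus of the
sensing-error symbol `Φ̄(t) = i ε (Σ_l sin(t lᵀw)) / (2 Σ_l sin²(t lᵀw / 2))` blows up
as `t → 0`, `t ≠ 0`. -/
theorem stmt15 (γ : ℕ) (hγ : 1 ≤ γ) (L0 : Finset (Fin γ → ℤ)) (hL0ne : L0.Nonempty)
    (w : Fin γ → ℝ) (hw : (∑ l ∈ L0, (∑ j, (l j : ℝ) * w j) ^ 2) ≠ 0) :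
    Tendsto (fun t : ℝ =>
        t * (∑ l ∈ L0, Real.sin (t * ∑ j, (l j : ℝ) * w j)) /
          (2 * ∑ l ∈ L0, Real.sin (t * (∑ j, (l j : ℝ) * w j) / 2) ^ 2))
      (nhdsWithin 0 {0}ᶜ)
      (nhds (2 * (∑ l ∈ L0, ∑ j, (l j : ℝ) * w j) /
        (∑ l ∈ L0, (∑ j, (l j : ℝ) * w j) ^ 2))) ∧
    ((∑ l ∈ L0, ∑ j, (l j : ℝ) * w j) ≠ 0 → ∀ ε : ℝ, 0 < ε →
      Tendsto (fun t : ℝ =>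
          ‖Complex.I * (ε : ℂ) *
              ((∑ l ∈ L0, Real.sin (t * ∑ j, (l j : ℝ) * w j) : ℝ) : ℂ) /
              ((2 * ∑ l ∈ L0, Real.sin (t * (∑ j, (l j : ℝ) * w j) / 2) ^ 2 : ℝ) : ℂ)‖)
        (nhdsWithin 0 {0}ᶜ) atTop) :=
  stmt15_general γ L0 w hw
end

section
/- (Proposition 3(i), quantitative instance.) Let γ ≥ 1 and let 𝓛₀ ⊂ ℤ^γ be a finite set of nonzero offsets with s₁ := Σ_{l∈𝓛₀} l₁ ≠ 0, and fix ε > 0. For every κ > 0 there exists M₀ ∈ ℕ such that for all integers M₁ ≥ M₀: taking the nonzero spatial frequency ξ = (2π/M₁, 0, …, 0), the quantity Φ̄_ξ = i ε (Σ_{l∈𝓛₀} sin(lᵀξ)) / (2 Σ_{l∈𝓛₀} sin²(lᵀξ/2)) is well defined (its denominator is nonzero), 1 + Φ̄_ξ ≠ 0, and the point z = −1/(1 + Φ̄_ξ) of the generalized critical set satisfies |z| < κ. Thus for large enough networks the set not to be encircled for closed-loop stability, which replaces the point −1, has points in any κ-neighborhood of the origin for some ξ ≠ 0. -/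
/-!
Along the first coordinate axis `ξ = (x, 0, …, 0)` the symbol is `Φ̄ = i ε N(x) / D(x)` with
`N(x) = Σ sin (l₁ x)` and `D(x) = 2 Σ sin² (l₁ x / 2)`. Since `N'(0) = s₁ ≠ 0`, `N(x) ~ s₁ x`,
while `0 ≤ D(x) ≤ (Σ l₁²) x² / 2` vanishes to second order. Moreover `D(x) = 0` forces every
`sin (l₁ x / 2) = 0`, hence `N(x) = 0` by `sin t = 2 sin (t/2) cos (t/2)`; so `D(x) > 0` for
small `x ≠ 0`, and `|ε N / D| → ∞` as `x = 2π / M₁ → 0`. Finally `|-1 / (1 + i y)| ≤ 1 / |y|`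
for real `y`.
-/

open Real Filter Topology Finset

section AxisSymbol

variable {ι : Type*} (s : Finset ι) (a : ι → ℝ)

theorem hasDerivAt_sum_sin_mul :
    HasDerivAt (fun x => ∑ i ∈ s, sin (a i * x)) (∑ i ∈ s, a i) 0 := by
  have h := HasDerivAt.fun_sum (u := s) fun i _ => ((hasDerivAt_id (0 : ℝ)).const_mul (a i)).sin
  simpa using h

theorem tendsto_sum_sin_mul_div :
    Tendsto (fun x => (∑ i ∈ s, sin (a i * x)) / x) (𝓝[≠] 0) (𝓝 (∑ i ∈ s, a i)) := by
  have h := (hasDerivAt_sum_sin_mul s a).tendsto_slope_zero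
  simp only [zero_add, mul_zero, sin_zero, sum_const_zero, sub_zero, smul_eq_mul] at h
  simpa only [inv_mul_eq_div] using h

theorem sum_sin_sq_half_le (x : ℝ) :
    2 * ∑ i ∈ s, sin (a i * x / 2) ^ 2 ≤ (∑ i ∈ s, a i ^ 2) * x ^ 2 / 2 := by
  calc 2 * ∑ i ∈ s, sin (a i * x / 2) ^ 2 ≤ 2 * ∑ i ∈ s, (a i * x / 2) ^ 2 := by
        gcongr 2 * ∑ i ∈ s, ?_ with i
        exact sq_le_sq.2 abs_sin_le_abs
    _ = (∑ i ∈ s, a i ^ 2) * x ^ 2 / 2 := by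
        simp only [mul_sum, sum_mul, sum_div]
        exact sum_congr rfl fun i _ => by ring

theorem tendsto_sum_sin_sq_half_div :
    Tendsto (fun x => (2 * ∑ i ∈ s, sin (a i * x / 2) ^ 2) / x) (𝓝[≠] 0) (𝓝 0) := by
  set B := ∑ i ∈ s, a i ^ 2
  have hbound : ∀ x, |(2 * ∑ i ∈ s, sin (a i * x / 2) ^ 2) / x| ≤ B / 2 * |x| := fun x => by
    rcases eq_or_ne x 0 with rfl | hx
    · simp
    have hD : 0 ≤ 2 * ∑ i ∈ s, sin (a i * x / 2) ^ 2 := by positivity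
    rw [abs_div, abs_of_nonneg hD, div_le_iff₀ (abs_pos.2 hx)]
    calc 2 * ∑ i ∈ s, sin (a i * x / 2) ^ 2 ≤ B * x ^ 2 / 2 := sum_sin_sq_half_le s a x
      _ = B / 2 * |x| * |x| := by rw [mul_assoc, abs_mul_abs_self]; ring
  have hlim : Tendsto (fun x : ℝ => B / 2 * |x|) (𝓝[≠] 0) (𝓝 0) := by
    have := ((continuous_const (y := B / 2)).mul continuous_abs).tendsto' (0 : ℝ) 0 (by simp)
    exact this.mono_left nhdsWithin_le_nhds
  exact squeeze_zero_norm hbound hlim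

theorem sum_sin_mul_eq_zero_of_sum_sin_sq_half_eq_zero {x : ℝ}
    (h : 2 * ∑ i ∈ s, sin (a i * x / 2) ^ 2 = 0) : ∑ i ∈ s, sin (a i * x) = 0 := by
  have hzero := (sum_eq_zero_iff_of_nonneg fun i _ => sq_nonneg (sin (a i * x / 2))).1
    ((mul_eq_zero.1 h).resolve_left two_ne_zero)
  refine sum_eq_zero fun i hi => ?_
  rw [show a i * x = 2 * (a i * x / 2) by ring, sin_two_mul, pow_eq_zero_iff two_ne_zero |>.1
    (hzero i hi)]
  ring

theorem eventually_sum_sin_sq_half_ne_zero (hs : ∑ i ∈ s, a i ≠ 0) :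
    ∀ᶠ x in 𝓝[≠] 0, 2 * ∑ i ∈ s, sin (a i * x / 2) ^ 2 ≠ 0 := by
  filter_upwards [(tendsto_sum_sin_mul_div s a).eventually_ne hs] with x hN hD
  rw [sum_sin_mul_eq_zero_of_sum_sin_sq_half_eq_zero s a hD, zero_div] at hN
  exact hN rfl

theorem tendsto_abs_sum_sin_mul_div_sum_sin_sq_half (hs : ∑ i ∈ s, a i ≠ 0) {ε : ℝ}
    (hε : 0 < ε) :
    Tendsto (fun x => |ε * (∑ i ∈ s, sin (a i * x)) / (2 * ∑ i ∈ s, sin (a i * x / 2) ^ 2)|)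
      (𝓝[≠] 0) atTop := by
  have hN : Tendsto (fun x => ε * |(∑ i ∈ s, sin (a i * x)) / x|) (𝓝[≠] 0)
      (𝓝 (ε * |∑ i ∈ s, a i|)) :=
    ((tendsto_sum_sin_mul_div s a).abs).const_mul ε
  have hD : Tendsto (fun x => |(2 * ∑ i ∈ s, sin (a i * x / 2) ^ 2) / x|) (𝓝[≠] 0)
      (𝓝[>] 0) := by
    refine tendsto_nhdsWithin_iff.2 ⟨by simpa using (tendsto_sum_sin_sq_half_div s a).abs, ?_⟩
    filter_upwards [eventually_sum_sin_sq_half_ne_zero s a hs, self_mem_nhdsWithin]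
      with x hDx hx
    exact abs_pos.2 (div_ne_zero hDx hx)
  refine (hN.pos_mul_atTop (by positivity) hD.inv_tendsto_nhdsGT_zero).congr' ?_
  filter_upwards [self_mem_nhdsWithin] with x hx
  simp only [Pi.inv_apply, abs_div, abs_mul, abs_of_pos hε, inv_div]
  rw [mul_assoc, div_mul_div_cancel₀ (abs_ne_zero.2 hx), mul_div_assoc]

end AxisSymbol

theorem Complex.one_add_I_mul_ofReal_ne_zero (y : ℝ) : 1 + Complex.I * y ≠ 0 := by
  intro h
  simpa using congrArg Complex.re h

theorem Complex.norm_neg_one_div_one_add_I_mul_ofReal_le {y : ℝ} (hy : y ≠ 0) :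
    ‖(-1 : ℂ) / (1 + Complex.I * y)‖ ≤ |y|⁻¹ := by
  rw [norm_div, norm_neg, norm_one, one_div]
  refine inv_anti₀ (abs_pos.2 hy) ?_
  simpa using Complex.abs_im_le_norm (1 + Complex.I * y)

theorem Complex.one_add_I_mul_div_ofReal (ε N D : ℝ) :
    1 + Complex.I * ε * (N : ℂ) / (D : ℂ) = 1 + Complex.I * ((ε * N / D : ℝ) : ℂ) := by
  push_cast
  ring

theorem tendsto_const_div_natCast_nhdsNE_zero {C : ℝ} (hC : C ≠ 0) :
    Tendsto (fun M : ℕ => C / M) atTop (𝓝[≠] 0) := by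
  refine tendsto_nhdsWithin_iff.2 ⟨tendsto_const_div_atTop_nhds_zero_nat C, ?_⟩
  filter_upwards [eventually_ne_atTop 0] with M hM
  exact div_ne_zero hC (Nat.cast_ne_zero.2 hM)

theorem stmt16_general (γ : ℕ) (hγ : 0 < γ) (L0 : Finset (Fin γ → ℤ))
    (hs : (∑ l ∈ L0, l ⟨0, hγ⟩) ≠ 0) (ε : ℝ) (hε : 0 < ε) :
    ∀ κ : ℝ, 0 < κ → ∃ M₀ : ℕ, ∀ M₁ : ℕ, M₀ ≤ M₁ →
      ∀ ξ : Fin γ → ℝ,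
        (ξ = fun j => if j = ⟨0, hγ⟩ then 2 * Real.pi / M₁ else 0) →
        (2 * ∑ l ∈ L0, Real.sin ((∑ j, (l j : ℝ) * ξ j) / 2) ^ 2) ≠ 0 ∧
        (1 : ℂ) + Complex.I * (ε : ℂ) *
            ((∑ l ∈ L0, Real.sin (∑ j, (l j : ℝ) * ξ j) : ℝ) : ℂ) /
            ((2 * ∑ l ∈ L0, Real.sin ((∑ j, (l j : ℝ) * ξ j) / 2) ^ 2 : ℝ) : ℂ) ≠ 0 ∧
        ‖(-1 : ℂ) / ((1 : ℂ) + Complex.I * (ε : ℂ) *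
            ((∑ l ∈ L0, Real.sin (∑ j, (l j : ℝ) * ξ j) : ℝ) : ℂ) /
            ((2 * ∑ l ∈ L0, Real.sin ((∑ j, (l j : ℝ) * ξ j) / 2) ^ 2 : ℝ) : ℂ))‖ < κ := by
  intro κ hκ
  set a : (Fin γ → ℤ) → ℝ := fun l => (l ⟨0, hγ⟩ : ℝ)
  have hsa : ∑ l ∈ L0, a l ≠ 0 := by simp only [a]; exact_mod_cast hs
  have hsmall := (eventually_sum_sin_sq_half_ne_zero L0 a hsa).and
    ((tendsto_abs_sum_sin_mul_div_sum_sin_sq_half L0 a hsa hε).eventually_gt_atTop κ⁻¹)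
  obtain ⟨M₀, hM₀⟩ := eventually_atTop.1
    ((tendsto_const_div_natCast_nhdsNE_zero (by positivity : 2 * π ≠ 0)).eventually hsmall)
  refine ⟨M₀, fun M hM ξ hξ => ?_⟩
  have hinner : ∀ l : Fin γ → ℤ, ∑ j, (l j : ℝ) * ξ j = a l * (2 * π / M) := by
    intro l
    simp [hξ, a]
  obtain ⟨hD, hy⟩ := hM₀ M hM
  simp only [hinner, Complex.one_add_I_mul_div_ofReal]
  have hy0 : ε * (∑ l ∈ L0, sin (a l * (2 * π / M))) /
      (2 * ∑ l ∈ L0, sin (a l * (2 * π / M) / 2) ^ 2) ≠ 0 :=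
    abs_pos.1 ((inv_pos.2 hκ).trans hy)
  refine ⟨hD, Complex.one_add_I_mul_ofReal_ne_zero _, ?_⟩
  calc _ ≤ _ := Complex.norm_neg_one_div_one_add_I_mul_ofReal_le hy0
    _ < κ := inv_lt_of_inv_lt₀ hκ hy

/-- Proposition 3(i), quantitative instance: if the offsets have nonzero first-coordinate
sum `s₁`, then for every `κ > 0` and all large enough torus sizes `M₁`, at the nonzero
spatial frequency `ξ = (2π/M₁, 0, …, 0)` the sensing-error symbol
`Φ̄_ξ = i ε (Σ_l sin(lᵀξ)) / (2 Σ_l sin²(lᵀξ/2))` is well defined, `1 + Φ̄_ξ ≠ 0`, and the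
generalized critical point `z = -1/(1 + Φ̄_ξ)` satisfies `|z| < κ`: the set replacing `-1`
in the Nyquist criterion comes within any `κ`-neighborhood of the origin. -/
theorem stmt16 (γ : ℕ) (hγ : 0 < γ) (L0 : Finset (Fin γ → ℤ)) (hL0 : ∀ l ∈ L0, l ≠ 0)
    (hs : (∑ l ∈ L0, l ⟨0, hγ⟩) ≠ 0) (ε : ℝ) (hε : 0 < ε) :
    ∀ κ : ℝ, 0 < κ → ∃ M₀ : ℕ, ∀ M₁ : ℕ, M₀ ≤ M₁ →
      ∀ ξ : Fin γ → ℝ,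
        (ξ = fun j => if j = ⟨0, hγ⟩ then 2 * Real.pi / M₁ else 0) →
        (2 * ∑ l ∈ L0, Real.sin ((∑ j, (l j : ℝ) * ξ j) / 2) ^ 2) ≠ 0 ∧
        (1 : ℂ) + Complex.I * (ε : ℂ) *
            ((∑ l ∈ L0, Real.sin (∑ j, (l j : ℝ) * ξ j) : ℝ) : ℂ) /
            ((2 * ∑ l ∈ L0, Real.sin ((∑ j, (l j : ℝ) * ξ j) / 2) ^ 2 : ℝ) : ℂ) ≠ 0 ∧
        ‖(-1 : ℂ) / ((1 : ℂ) + Complex.I * (ε : ℂ) *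
            ((∑ l ∈ L0, Real.sin (∑ j, (l j : ℝ) * ξ j) : ℝ) : ℂ) /
            ((2 * ∑ l ∈ L0, Real.sin ((∑ j, (l j : ℝ) * ξ j) / 2) ^ 2 : ℝ) : ℂ))‖ < κ :=
  stmt16_general γ hγ L0 hs ε hε
end
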